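/- arXiv:1607.06115 — 2 statements merged into one kernel-verified Lean document; each statement's English description precedes it below -/
import Mathlib

section
/- Let g be a finite-dimensional semisimple complex Lie algebra, V(λ_1),...,V(λ_d) finite-dimensional irreducible g-modules with highest weights λ_1,...,λ_d, and p_1,...,p_d distinct complex numbers. Then the evaluation module V(λ_1)⊗...⊗V(λ_d) is an irreducible g[t]-module. -/
/-! Choosing `P` to be the Lagrange basis polynomial at `p i`, the operators `P ⊗ x` act through
`x` on the `i`-th tensor factor alone. By Burnside's theorem (Schur's lemma plus Jacobson density)
the irreducible `g`-module `V i` then generates all of `End (V i)`, so an invariant subspace is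
invariant under every `⨂ T i`, and rank-one operators of this form carry any nonzero vector to
any pure tensor. -/

open scoped TensorProduct

attribute [local instance 100] LieRing.ofAssociativeRing

noncomputable instance currentLieAlgebra
    (g : Type*) [LieRing g] [LieAlgebra ℂ g] :
    LieAlgebra ℂ (Polynomial ℂ ⊗[ℂ] g) where
  lie_smul t x y := by
    have h1 : t • y = (algebraMap ℂ (Polynomial ℂ) t) • y := (algebraMap_smul _ t y).symm
    have h2 : t • ⁅x, y⁆ = (algebraMap ℂ (Polynomial ℂ) t) • ⁅x, y⁆ :=
      (algebraMap_smul _ t _).symm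
    rw [h1, h2]
    exact LieAlgebra.lie_smul (R := Polynomial ℂ) (L := Polynomial ℂ ⊗[ℂ] g) _ _ _

namespace Submodule

variable {R M : Type*} [CommSemiring R] [AddCommMonoid M] [Module R M]

def endStabilizer (q : Submodule R M) : Subalgebra R (Module.End R M) where
  carrier := {f | Set.MapsTo f q q}
  mul_mem' hf hg := hf.comp hg
  add_mem' hf hg _ hw := q.add_mem (hf hw) (hg hw)
  algebraMap_mem' c _ hw := q.smul_mem c hw

end Submodule

namespace PiTensorProduct

open Function

section CommSemiring

variable {ι R : Type*} [CommSemiring R] {M : ι → Type*} [∀ i, AddCommMonoid (M i)]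
  [∀ i, Module R (M i)] [DecidableEq ι]

noncomputable def endSingle (i : ι) : Module.End R (M i) →ₐ[R] Module.End R (⨂[R] j, M j) :=
  AlgHom.ofLinearMap ((mapMultilinear R M M).toLinearMap 1 i)
    (by
      change map (Pi.mulSingle i 1) = 1
      rw [Pi.mulSingle_one]
      exact PiTensorProduct.map_one)
    (fun S T ↦ by
      change map (Pi.mulSingle i (S * T)) = map (Pi.mulSingle i S) * map (Pi.mulSingle i T)
      rw [Pi.mulSingle_mul]
      exact PiTensorProduct.map_mul _ _)

theorem endSingle_apply (i : ι) (T : Module.End R (M i)) :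
    endSingle i T = map (Pi.mulSingle i T) :=
  rfl

theorem endSingle_tprod (i : ι) (T : Module.End R (M i)) (v : Π j, M j) :
    endSingle i T (tprod R v) = tprod R (update v i (T (v i))) := by
  rw [endSingle_apply, map_tprod]
  congr 1 with j
  rcases eq_or_ne j i with rfl | hj
  · simp
  · simp [hj]

theorem map_mem_of_forall_endSingle_mem [Fintype ι]
    {S : Subalgebra R (Module.End R (⨂[R] j, M j))} (hS : ∀ i T, endSingle i T ∈ S)
    (T : Π i, Module.End R (M i)) : map T ∈ S := by
  change T ∈ S.toSubmonoid.comap mapMonoidHom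
  rw [← Finset.noncommProd_mulSingle T]
  exact Submonoid.noncommProd_mem _ _ _ _ fun i _ ↦ hS i (T i)

end CommSemiring

theorem map_smulRight_coord {ι R : Type*} [CommSemiring R] {M : ι → Type*}
    [∀ i, AddCommMonoid (M i)] [∀ i, Module R (M i)] [Fintype ι] {κ : ι → Type*}
    (b : Π i, Module.Basis (κ i) R (M i)) (l : Π i, κ i) (v : Π i, M i) :
    map (fun i ↦ ((b i).coord (l i)).smulRight (v i)) =
      ((Basis.piTensorProduct b).coord l).smulRight (tprod R v) := by
  refine PiTensorProduct.ext (MultilinearMap.ext fun w ↦ ?_)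
  simp [MultilinearMap.map_smul_univ]

variable {ι K : Type*} [Field K] {V : ι → Type*} [∀ i, AddCommGroup (V i)] [∀ i, Module K (V i)]
  [Fintype ι]

theorem eq_bot_or_eq_top_of_forall_map_mem (q : Submodule K (⨂[K] i, V i))
    (hq : ∀ T : Π i, Module.End K (V i), map T ∈ q.endStabilizer) : q = ⊥ ∨ q = ⊤ := by
  refine or_iff_not_imp_left.2 fun hq0 ↦ ?_
  obtain ⟨w, hwq, hw0⟩ := q.exists_mem_ne_zero_of_ne_bot hq0
  let b i := Module.Free.chooseBasis K (V i)
  obtain ⟨l, hl⟩ := Finsupp.ne_iff.1 ((Basis.piTensorProduct b).repr.map_ne_zero_iff.2 hw0)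
  rw [eq_top_iff, ← span_tprod_eq_top, Submodule.span_le]
  rintro _ ⟨v, rfl⟩
  -- this rank-one operator sends `w` to a nonzero multiple of `tprod K v`
  have hv := hq (fun i ↦ ((b i).coord (l i)).smulRight (v i)) hwq
  rw [map_smulRight_coord, LinearMap.smulRight_apply, Module.Basis.coord_apply] at hv
  simpa [smul_smul, inv_mul_cancel₀ hl] using q.smul_mem ((Basis.piTensorProduct b).repr w l)⁻¹ hv

instance [∀ i, Nontrivial (V i)] : Nontrivial (⨂[K] i, V i) :=
  let b := Basis.piTensorProduct fun i ↦ Module.Free.chooseBasis K (V i)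
  ⟨_, 0, b.ne_zero (fun i ↦ (Module.Free.chooseBasis K (V i)).index_nonempty.some)⟩

end PiTensorProduct

namespace Subalgebra

variable {K V : Type*} [Field K] [AddCommGroup V] [Module K V]

theorem isSimpleModule_of_forall_endStabilizer [Nontrivial V] (B : Subalgebra K (Module.End K V))
    (h : ∀ W : Submodule K V, B ≤ W.endStabilizer → W = ⊥ ∨ W = ⊤) : IsSimpleModule B V := by
  refine { eq_bot_or_eq_top := fun W ↦ ?_ }
  simpa using h (W.restrictScalars K) fun f hf w hw ↦ W.smul_mem ⟨f, hf⟩ hw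

theorem eq_top_of_isSimpleModule [IsAlgClosed K] [FiniteDimensional K V]
    (B : Subalgebra K (Module.End K V)) [IsSimpleModule B V] : B = ⊤ := by
  -- By Schur, `End B V = K`, so every `f` is `End B V`-linear; density realizes it in `B`.
  have schur := IsSimpleModule.algebraMap_end_bijective_of_isAlgClosed K (A := B) (V := V)
  have : Module.Finite (Module.End B V) V := .of_restrictScalars_finite K _ _
  refine eq_top_iff.2 fun f _ ↦ ?_
  let f' : Module.End (Module.End B V) V :=
    { toFun := f
      map_add' := f.map_add
      map_smul' := fun c v ↦ by
        obtain ⟨a, rfl⟩ := schur.2 c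
        simp }
  obtain ⟨b, hb⟩ := Module.Finite.toModuleEnd_moduleEnd_surjective f'
  convert b.2
  ext v
  exact congr($hb v).symm

end Subalgebra

section Lie

open PiTensorProduct Polynomial

variable {K : Type*} [Field K] {g : Type*} [LieRing g] [LieAlgebra K g]

theorem Subalgebra.eq_top_of_forall_toEnd_mem [IsAlgClosed K] {V : Type*} [AddCommGroup V]
    [Module K V] [LieRingModule g V] [LieModule K g V] [FiniteDimensional K V]
    [LieModule.IsIrreducible K g V] (B : Subalgebra K (Module.End K V))
    (hB : ∀ x, LieModule.toEnd K g V x ∈ B) : B = ⊤ := by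
  have := LieModule.nontrivial_of_isIrreducible K g V
  have := B.isSimpleModule_of_forall_endStabilizer fun W hW ↦ by
    let W' : LieSubmodule K g V := { W with lie_mem := fun {x} _ hm ↦ hW (hB x) hm }
    simpa [← LieSubmodule.toSubmodule_eq_bot, ← LieSubmodule.toSubmodule_eq_top] using
      eq_bot_or_eq_top W'
  exact B.eq_top_of_isSimpleModule

theorem apply_lagrangeBasis_tmul_eq_endSingle {ι : Type*} [Fintype ι] [DecidableEq ι]
    {V : ι → Type*} [∀ i, AddCommGroup (V i)] [∀ i, Module K (V i)] [∀ i, LieRingModule g (V i)]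
    [∀ i, LieModule K g (V i)] {p : ι → K} (hp : Function.Injective p)
    {φ : K[X] ⊗[K] g → Module.End K (⨂[K] i, V i)}
    (hφ : ∀ (P : K[X]) (x : g) (v : Π i, V i),
      φ (P ⊗ₜ x) (tprod K v) = ∑ i, P.eval (p i) • tprod K (Function.update v i ⁅x, v i⁆))
    (i : ι) (x : g) :
    φ (Lagrange.basis Finset.univ p i ⊗ₜ x) = endSingle i (LieModule.toEnd K g (V i) x) := by
  refine PiTensorProduct.ext (MultilinearMap.ext fun v ↦ ?_)
  simp only [LinearMap.compMultilinearMap_apply, hφ, endSingle_tprod, LieModule.toEnd_apply_apply]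
  refine (Finset.sum_eq_single i (fun j _ hj ↦ ?_) (by simp)).trans ?_
  · rw [Lagrange.eval_basis_of_ne hj.symm (Finset.mem_univ j), zero_smul]
  · rw [Lagrange.eval_basis_self hp.injOn (Finset.mem_univ i), one_smul]

end Lie

theorem evaluation_module_irreducible_general
    (g : Type*) [LieRing g] [LieAlgebra ℂ g]
    {d : ℕ} (V : Fin d → Type*) [∀ i, AddCommGroup (V i)] [∀ i, Module ℂ (V i)]
    [∀ i, LieRingModule g (V i)] [∀ i, LieModule ℂ g (V i)]
    [∀ i, FiniteDimensional ℂ (V i)] [∀ i, LieModule.IsIrreducible ℂ g (V i)]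
    (p : Fin d → ℂ) (hp : Function.Injective p)
    (φ : (Polynomial ℂ ⊗[ℂ] g) →ₗ⁅ℂ⁆ Module.End ℂ (⨂[ℂ] i, V i))
    (hφ : ∀ (P : Polynomial ℂ) (x : g) (v : (i : Fin d) → V i),
      φ (P ⊗ₜ[ℂ] x) (PiTensorProduct.tprod ℂ v) =
        ∑ i, P.eval (p i) • PiTensorProduct.tprod ℂ (Function.update v i ⁅x, v i⁆)) :
    (⊥ : Submodule ℂ (⨂[ℂ] i, V i)) ≠ ⊤ ∧
    ∀ q : Submodule ℂ (⨂[ℂ] i, V i),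
      (∀ z : Polynomial ℂ ⊗[ℂ] g, ∀ w ∈ q, φ z w ∈ q) → q = ⊥ ∨ q = ⊤ := by
  have := fun i ↦ LieModule.nontrivial_of_isIrreducible ℂ g (V i)
  refine ⟨bot_ne_top, fun q hq ↦ PiTensorProduct.eq_bot_or_eq_top_of_forall_map_mem q
    (PiTensorProduct.map_mem_of_forall_endSingle_mem fun i T ↦ ?_)⟩
  have hcomap : q.endStabilizer.comap (PiTensorProduct.endSingle i) = ⊤ :=
    Subalgebra.eq_top_of_forall_toEnd_mem _ fun x ↦ by
      rw [Subalgebra.mem_comap, ← apply_lagrangeBasis_tmul_eq_endSingle hp hφ]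
      exact hq _
  exact (Subalgebra.mem_comap ..).1 (hcomap ▸ Algebra.mem_top)

/-- For `g` finite-dimensional semisimple, `V i` finite-dimensional
irreducible `g`-modules and pairwise distinct points `p i ∈ ℂ`, the evaluation module
`V 0 ⊗ ⋯ ⊗ V (d-1)` is an irreducible module over the current algebra `g[t]`:
the zero submodule is proper, and any `ℂ`-subspace stable under the evaluation action
of `g[t]` is `⊥` or `⊤`. -/
theorem evaluation_module_irreducible
    (g : Type*) [LieRing g] [LieAlgebra ℂ g] [FiniteDimensional ℂ g]
    [LieAlgebra.IsSemisimple ℂ g]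
    {d : ℕ} (V : Fin d → Type*) [∀ i, AddCommGroup (V i)] [∀ i, Module ℂ (V i)]
    [∀ i, LieRingModule g (V i)] [∀ i, LieModule ℂ g (V i)]
    [∀ i, FiniteDimensional ℂ (V i)] [∀ i, LieModule.IsIrreducible ℂ g (V i)]
    (p : Fin d → ℂ) (hp : Function.Injective p)
    (φ : (Polynomial ℂ ⊗[ℂ] g) →ₗ⁅ℂ⁆ Module.End ℂ (⨂[ℂ] i, V i))
    (hφ : ∀ (P : Polynomial ℂ) (x : g) (v : (i : Fin d) → V i),
      φ (P ⊗ₜ[ℂ] x) (PiTensorProduct.tprod ℂ v) =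
        ∑ i, P.eval (p i) • PiTensorProduct.tprod ℂ (Function.update v i ⁅x, v i⁆)) :
    (⊥ : Submodule ℂ (⨂[ℂ] i, V i)) ≠ ⊤ ∧
    ∀ q : Submodule ℂ (⨂[ℂ] i, V i),
      (∀ z : Polynomial ℂ ⊗[ℂ] g, ∀ w ∈ q, φ z w ∈ q) → q = ⊥ ∨ q = ⊤ :=
  evaluation_module_irreducible_general g V p hp φ hφ
end

section
/- With notation as in the Schur–Weyl setting (V = C^n, distinct evaluation points p_1,...,p_k, surjection Ξ: [U(gl(n)[t])]^{gl(n)} → C[Σ_k]): for a transposition τ = (r,s) ∈ Σ_k, define P_τ = (t−p_r+1)·∏_{d≠r} (t−p_d)/(p_r−p_d) and Q_τ = (t−p_s+1)·∏_{d≠s} (t−p_d)/(p_s−p_d). Then Ξ(Σ_{1≤i,j≤n} E_{i,j}(P_τ)·E_{j,i}(Q_τ)) = τ. -/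
/-!
Both interpolation polynomials are shifted Lagrange basis polynomials: `P_τ` evaluates to `1`
at `p r` and to `0` at every other node, and likewise `Q_τ` at `p s`. Under the evaluation
action, `E_{i,j}(P_τ) E_{j,i}(Q_τ)` therefore only touches the factors `r` and `s`, sending
`v_r ⊗ v_s` to `(v_r)_j (v_s)_i · e_i ⊗ e_j`. Summing over `i, j` and expanding `v_s` and
`v_r` in the standard basis reassembles `v_s ⊗ v_r`, i.e. the flip of the two factors.
-/

open scoped TensorProduct
open Polynomial
attribute [local instance 100] LieRing.ofAssociativeRing

open Function PiTensorProduct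
open scoped Matrix

theorem Lagrange.eval_shifted_basis_univ {F ι : Type*} [Field F] [Fintype ι] [DecidableEq ι]
    {p : ι → F} (hp : Injective p) (u a : ι) :
    ((X - C (p u) + 1) * Lagrange.basis Finset.univ p u).eval (p a) =
      if a = u then 1 else 0 := by
  rcases eq_or_ne a u with rfl | hau
  · simp [Lagrange.eval_basis_self hp.injOn (Finset.mem_univ a)]
  · simp [Lagrange.eval_basis_of_ne hau.symm (Finset.mem_univ a), hau]

theorem Matrix.single_one_mulVec {m R : Type*} [Fintype m] [DecidableEq m] [Semiring R]
    (i j : m) (w : m → R) : Matrix.single i j (1 : R) *ᵥ w = w j • Pi.single i 1 := by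
  ext a
  simp [Matrix.single_mulVec, Pi.single_apply, Function.update_apply]

namespace MultilinearMap

variable {R ι κ M : Type*} [CommSemiring R] [DecidableEq ι] [Fintype κ] [DecidableEq κ]
  [AddCommMonoid M] [Module R M] (f : MultilinearMap R (fun _ : ι => κ → R) M)

theorem map_update_eq_sum_single (m : ι → κ → R) (u : ι) (w : κ → R) :
    f (Function.update m u w) = ∑ i, w i • f (Function.update m u (Pi.single i 1)) := by
  conv_lhs => rw [← Finset.univ_sum_single w]
  rw [f.map_update_sum]
  refine Finset.sum_congr rfl fun i _ => ?_
  rw [← f.map_update_smul, ← Pi.single_smul', smul_eq_mul, mul_one]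

theorem map_update_update_eq_sum_single {r s : ι} (hrs : r ≠ s) (m : ι → κ → R)
    (a b : κ → R) :
    f (Function.update (Function.update m s b) r a) =
      ∑ i, ∑ j, a i • b j •
        f (Function.update (Function.update m s (Pi.single j 1)) r (Pi.single i 1)) := by
  rw [f.map_update_eq_sum_single]
  refine Finset.sum_congr rfl fun i _ => ?_
  rw [update_comm hrs.symm, f.map_update_eq_sum_single, Finset.smul_sum]
  simp only [update_comm hrs]

end MultilinearMap

section EvaluationAction

variable {ι m : Type*} [Fintype ι] [DecidableEq ι] [Fintype m] [DecidableEq m]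

def IsEvaluationAction (p : ι → ℂ)
    (φ : (Polynomial ℂ ⊗[ℂ] Matrix m m ℂ) →ₗ⁅ℂ⁆ Module.End ℂ (⨂[ℂ] _ : ι, (m → ℂ))) : Prop :=
  ∀ (P : Polynomial ℂ) (x : Matrix m m ℂ) (v : ι → m → ℂ),
    φ (P ⊗ₜ[ℂ] x) (tprod ℂ v) =
      ∑ i, P.eval (p i) • tprod ℂ (Function.update v i (x.mulVecLin (v i)))

variable {p : ι → ℂ}
  {φ : (Polynomial ℂ ⊗[ℂ] Matrix m m ℂ) →ₗ⁅ℂ⁆ Module.End ℂ (⨂[ℂ] _ : ι, (m → ℂ))}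

theorem IsEvaluationAction.apply_tprod_of_eval_eq_ite (hφ : IsEvaluationAction p φ)
    {P : Polynomial ℂ} {u : ι} (hP : ∀ a, P.eval (p a) = if a = u then 1 else 0)
    (x : Matrix m m ℂ) (v : ι → m → ℂ) :
    φ (P ⊗ₜ[ℂ] x) (tprod ℂ v) = tprod ℂ (Function.update v u (x *ᵥ v u)) := by
  simp [hφ P x v, hP, ite_smul]

theorem IsEvaluationAction.apply_single_apply_single_tprod (hφ : IsEvaluationAction p φ)
    {P Q : Polynomial ℂ} {r s : ι} (hrs : r ≠ s)
    (hP : ∀ a, P.eval (p a) = if a = r then 1 else 0)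
    (hQ : ∀ a, Q.eval (p a) = if a = s then 1 else 0) (i j : m) (v : ι → m → ℂ) :
    φ (P ⊗ₜ[ℂ] Matrix.single i j 1) (φ (Q ⊗ₜ[ℂ] Matrix.single j i 1) (tprod ℂ v)) =
      v s i • v r j •
        tprod ℂ (Function.update (Function.update v s (Pi.single j 1)) r (Pi.single i 1)) := by
  rw [hφ.apply_tprod_of_eval_eq_ite hQ, hφ.apply_tprod_of_eval_eq_ite hP,
    update_of_ne hrs, Matrix.single_one_mulVec, Matrix.single_one_mulVec,
    MultilinearMap.map_update_smul, update_comm hrs.symm, MultilinearMap.map_update_smul,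
    update_comm hrs, smul_comm]

end EvaluationAction

/-- In the Schur–Weyl setting (`V = ℂⁿ`, evaluation points
`p 0, …, p (k-1)` distinct, evaluation action `φ` of `gl(n)[t]` on `V^{⊗k}`), for a
transposition `τ = (r, s)` define
`P_τ = (t - p r + 1) ∏_{d ≠ r} (t - p d)/(p r - p d)` and
`Q_τ = (t - p s + 1) ∏_{d ≠ s} (t - p d)/(p s - p d)`.
Then `Ξ(∑_{i,j} E_{i,j}(P_τ) · E_{j,i}(Q_τ)) = τ`, i.e. the corresponding element of
`U(gl(n)[t])` acts on `V^{⊗k}` as the flip of the `r`-th and `s`-th tensor factors. -/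
theorem schur_weyl_transposition_preimage
    (n k : ℕ) (p : Fin k → ℂ) (hp : Function.Injective p)
    (φ : (Polynomial ℂ ⊗[ℂ] Matrix (Fin n) (Fin n) ℂ) →ₗ⁅ℂ⁆
      Module.End ℂ (⨂[ℂ]^k (Fin n → ℂ)))
    (hφ : ∀ (P : Polynomial ℂ) (x : Matrix (Fin n) (Fin n) ℂ) (v : Fin k → Fin n → ℂ),
      φ (P ⊗ₜ[ℂ] x) (PiTensorProduct.tprod ℂ v) =
        ∑ i, P.eval (p i) •
          PiTensorProduct.tprod ℂ (Function.update v i (Matrix.mulVecLin x (v i))))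
    (r s : Fin k) (hrs : r ≠ s)
    (Pτ Qτ : Polynomial ℂ)
    (hP : Pτ = (X - C (p r) + 1) *
      ∏ d ∈ Finset.univ.erase r, (C ((p r - p d)⁻¹) * (X - C (p d))))
    (hQ : Qτ = (X - C (p s) + 1) *
      ∏ d ∈ Finset.univ.erase s, (C ((p s - p d)⁻¹) * (X - C (p d))))
    (v : Fin k → Fin n → ℂ) :
    UniversalEnvelopingAlgebra.lift ℂ φ
      (∑ i : Fin n, ∑ j : Fin n,
        UniversalEnvelopingAlgebra.ι ℂ (Pτ ⊗ₜ[ℂ] Matrix.single i j (1 : ℂ)) *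
        UniversalEnvelopingAlgebra.ι ℂ (Qτ ⊗ₜ[ℂ] Matrix.single j i (1 : ℂ)))
      (PiTensorProduct.tprod ℂ v)
    = PiTensorProduct.tprod ℂ (fun j => v (Equiv.swap r s j)) := by
  have hφ : IsEvaluationAction p φ := hφ
  have hPτ : ∀ a, Pτ.eval (p a) = if a = r then 1 else 0 :=
    hP ▸ Lagrange.eval_shifted_basis_univ hp r
  have hQτ : ∀ a, Qτ.eval (p a) = if a = s then 1 else 0 :=
    hQ ▸ Lagrange.eval_shifted_basis_univ hp s
  simp only [map_sum, map_mul, LinearMap.sum_apply, Module.End.mul_apply,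
    UniversalEnvelopingAlgebra.lift_ι_apply, hφ.apply_single_apply_single_tprod hrs hPτ hQτ]
  rw [show (fun j => v (Equiv.swap r s j)) = v ∘ Equiv.swap r s from rfl,
    Equiv.comp_swap_eq_update, MultilinearMap.map_update_update_eq_sum_single _ hrs]
end
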